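/- Let {ψ(θ,S), θ,S ∈ T_0} be a biadmissible family of nonnegative random variables. For each θ ∈ T_0 define u_1(θ) = ess sup_{τ_1 ∈ T_θ} E[ψ(τ_1, θ) | F_θ] and u_2(θ) = ess sup_{τ_2 ∈ T_θ} E[ψ(θ, τ_2) | F_θ]. Then the families {u_1(θ), θ ∈ T_0}, {u_2(θ), θ ∈ T_0}, and {φ(θ) := max(u_1(θ), u_2(θ)), θ ∈ T_0} are admissible families of nonnegative random variables. -/

import Mathlib

open MeasureTheory Filter Set Topology

variable {Ω : Type*}

/-- `τ` belongs to `T_0`: it is a stopping time of `𝓕` with values in `[0, T]`. -/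
def MemT0 {m0 : MeasurableSpace Ω} (𝓕 : MeasureTheory.Filtration ℝ m0) (T : ℝ)
    (τ : Ω → ℝ) : Prop :=
  MeasureTheory.IsStoppingTime 𝓕 (fun ω => (τ ω : WithTop ℝ)) ∧ ∀ ω, τ ω ∈ Set.Icc (0 : ℝ) T

/-- `v` is an essential supremum of the family `f i`, `i` ranging over `{i | P i}`:
it dominates every member a.s. and is a.s. below any other a.s. upper bound. -/
def IsEssSupFam {m0 : MeasurableSpace Ω} (μ : MeasureTheory.Measure Ω) {ι : Sort*}
    (P : ι → Prop) (f : ι → Ω → ℝ) (v : Ω → ℝ) : Prop :=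
  (∀ i, P i → f i ≤ᵐ[μ] v) ∧ ∀ w : Ω → ℝ, (∀ i, P i → f i ≤ᵐ[μ] w) → v ≤ᵐ[μ] w

/-- `v` is an essential infimum of the family `f i`, `i` ranging over `{i | P i}`. -/
def IsEssInfFam {m0 : MeasurableSpace Ω} (μ : MeasureTheory.Measure Ω) {ι : Sort*}
    (P : ι → Prop) (f : ι → Ω → ℝ) (v : Ω → ℝ) : Prop :=
  (∀ i, P i → v ≤ᵐ[μ] f i) ∧ ∀ w : Ω → ℝ, (∀ i, P i → w ≤ᵐ[μ] f i) → w ≤ᵐ[μ] v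

/-- An admissible family of nonnegative random variables indexed by the stopping
times in `T_0`: `φ τ` is a nonnegative `F_τ`-measurable random variable, and
`φ τ = φ τ'` a.s. on `{τ = τ'}`. -/
def Admissible {m0 : MeasurableSpace Ω} (𝓕 : MeasureTheory.Filtration ℝ m0) (T : ℝ)
    (μ : MeasureTheory.Measure Ω) (φ : (Ω → ℝ) → Ω → ℝ) : Prop :=
  (∀ τ (hτ : MemT0 𝓕 T τ),
      Measurable[hτ.1.measurableSpace] (φ τ) ∧ ∀ ω, 0 ≤ φ τ ω) ∧
  ∀ τ τ', MemT0 𝓕 T τ → MemT0 𝓕 T τ' →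
    ∀ᵐ ω ∂μ, τ ω = τ' ω → φ τ ω = φ τ' ω

/-- An a.e. variant of admissibility (for families defined only up to a.s. equality,
such as value-function families): `φ τ` is a.s. nonnegative and a.s. equal to some
`F_τ`-measurable random variable, and `φ τ = φ τ'` a.s. on `{τ = τ'}`. -/
def AdmissibleAE {m0 : MeasurableSpace Ω} (𝓕 : MeasureTheory.Filtration ℝ m0) (T : ℝ)
    (μ : MeasureTheory.Measure Ω) (φ : (Ω → ℝ) → Ω → ℝ) : Prop :=
  (∀ τ (hτ : MemT0 𝓕 T τ),
      (∀ᵐ ω ∂μ, 0 ≤ φ τ ω) ∧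
      ∃ w : Ω → ℝ, Measurable[hτ.1.measurableSpace] w ∧ φ τ =ᵐ[μ] w) ∧
  ∀ τ τ', MemT0 𝓕 T τ → MemT0 𝓕 T τ' →
    ∀ᵐ ω ∂μ, τ ω = τ' ω → φ τ ω = φ τ' ω

/-- A biadmissible family: `ψ τ S` is a nonnegative `F_{τ ∨ S}`-measurable random
variable, and `ψ τ S = ψ τ' S'` a.s. on `{τ = τ'} ∩ {S = S'}`. -/
def Biadmissible {m0 : MeasurableSpace Ω} (𝓕 : MeasureTheory.Filtration ℝ m0) (T : ℝ)
    (μ : MeasureTheory.Measure Ω) (ψ : (Ω → ℝ) → (Ω → ℝ) → Ω → ℝ) : Prop :=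
  (∀ τ S (hτ : MemT0 𝓕 T τ) (hS : MemT0 𝓕 T S),
      Measurable[(hτ.1.max hS.1).measurableSpace] (ψ τ S) ∧ ∀ ω, 0 ≤ ψ τ S ω) ∧
  ∀ τ τ' S S', MemT0 𝓕 T τ → MemT0 𝓕 T τ' → MemT0 𝓕 T S → MemT0 𝓕 T S' →
    ∀ᵐ ω ∂μ, τ ω = τ' ω → S ω = S' ω → ψ τ S ω = ψ τ' S' ω

/-- `θn ↓ θ` a.s.: the sequence is a.s. nonincreasing and converges a.s. to `θ`. -/
def DownAS {m0 : MeasurableSpace Ω} (μ : MeasureTheory.Measure Ω)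
    (θn : ℕ → Ω → ℝ) (θ : Ω → ℝ) : Prop :=
  ∀ᵐ ω ∂μ, (∀ n, θn (n + 1) ω ≤ θn n ω) ∧
    Filter.Tendsto (fun n => θn n ω) Filter.atTop (nhds (θ ω))

/-- `θn ↑ θ` a.s.: the sequence is a.s. nondecreasing and converges a.s. to `θ`. -/
def UpAS {m0 : MeasurableSpace Ω} (μ : MeasureTheory.Measure Ω)
    (θn : ℕ → Ω → ℝ) (θ : Ω → ℝ) : Prop :=
  ∀ᵐ ω ∂μ, (∀ n, θn n ω ≤ θn (n + 1) ω) ∧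
    Filter.Tendsto (fun n => θn n ω) Filter.atTop (nhds (θ ω))

/-- The family `φ` is right continuous along stopping times in expectation. -/
def RCE {m0 : MeasurableSpace Ω} (𝓕 : MeasureTheory.Filtration ℝ m0) (T : ℝ)
    (μ : MeasureTheory.Measure Ω) (φ : (Ω → ℝ) → Ω → ℝ) : Prop :=
  ∀ θ, MemT0 𝓕 T θ → ∀ θn : ℕ → Ω → ℝ, (∀ n, MemT0 𝓕 T (θn n)) → DownAS μ θn θ →
    Filter.Tendsto (fun n => ∫ ω, φ (θn n) ω ∂μ) Filter.atTop (nhds (∫ ω, φ θ ω ∂μ))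

/-- The family `φ` is left continuous along stopping times in expectation. -/
def LCE {m0 : MeasurableSpace Ω} (𝓕 : MeasureTheory.Filtration ℝ m0) (T : ℝ)
    (μ : MeasureTheory.Measure Ω) (φ : (Ω → ℝ) → Ω → ℝ) : Prop :=
  ∀ θ, MemT0 𝓕 T θ → ∀ θn : ℕ → Ω → ℝ, (∀ n, MemT0 𝓕 T (θn n)) → UpAS μ θn θ →
    Filter.Tendsto (fun n => ∫ ω, φ (θn n) ω ∂μ) Filter.atTop (nhds (∫ ω, φ θ ω ∂μ))

/-- The biadmissible family `ψ` is uniformly right continuous in expectation along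
stopping times: for `S_n ↓ S` a.s. (all in `T_0`), the expectation of the essential
supremum over `θ ∈ T_0` of `|ψ(θ, S) - ψ(θ, S_n)|` (resp. `|ψ(S, θ) - ψ(S_n, θ)|`)
tends to `0`. -/
def URCE {m0 : MeasurableSpace Ω} (𝓕 : MeasureTheory.Filtration ℝ m0) (T : ℝ)
    (μ : MeasureTheory.Measure Ω) (ψ : (Ω → ℝ) → (Ω → ℝ) → Ω → ℝ) : Prop :=
  ∀ S, MemT0 𝓕 T S → ∀ Sn : ℕ → Ω → ℝ, (∀ n, MemT0 𝓕 T (Sn n)) → DownAS μ Sn S →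
    (∀ D : ℕ → Ω → ℝ,
      (∀ n, IsEssSupFam μ (MemT0 𝓕 T) (fun θ ω => |ψ θ S ω - ψ θ (Sn n) ω|) (D n)) →
      Filter.Tendsto (fun n => ∫ ω, D n ω ∂μ) Filter.atTop (nhds 0)) ∧
    ∀ D : ℕ → Ω → ℝ,
      (∀ n, IsEssSupFam μ (MemT0 𝓕 T) (fun θ ω => |ψ S θ ω - ψ (Sn n) θ ω|) (D n)) →
      Filter.Tendsto (fun n => ∫ ω, D n ω ∂μ) Filter.atTop (nhds 0)

/-- The biadmissible family `ψ` is uniformly left continuous in expectation along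
stopping times. -/
def ULCE {m0 : MeasurableSpace Ω} (𝓕 : MeasureTheory.Filtration ℝ m0) (T : ℝ)
    (μ : MeasureTheory.Measure Ω) (ψ : (Ω → ℝ) → (Ω → ℝ) → Ω → ℝ) : Prop :=
  ∀ S, MemT0 𝓕 T S → ∀ Sn : ℕ → Ω → ℝ, (∀ n, MemT0 𝓕 T (Sn n)) → UpAS μ Sn S →
    (∀ D : ℕ → Ω → ℝ,
      (∀ n, IsEssSupFam μ (MemT0 𝓕 T) (fun θ ω => |ψ θ S ω - ψ θ (Sn n) ω|) (D n)) →
      Filter.Tendsto (fun n => ∫ ω, D n ω ∂μ) Filter.atTop (nhds 0)) ∧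
    ∀ D : ℕ → Ω → ℝ,
      (∀ n, IsEssSupFam μ (MemT0 𝓕 T) (fun θ ω => |ψ S θ ω - ψ (Sn n) θ ω|) (D n)) →
      Filter.Tendsto (fun n => ∫ ω, D n ω ∂μ) Filter.atTop (nhds 0)

/-! An essential supremum of `F_θ`-measurable variables has an `F_θ`-measurable version: among
the `F_θ`-measurable a.e. minorants of `u θ`, a countable supremum of a sequence almost maximizing
`h ↦ ∫ arctan h` is a greatest one, by strict monotonicity of `arctan`, and it dominates every
`E[ψ(τ, θ) | F_θ]`.

On `A = {θ = θ'}`, which lies in `F_θ ∩ F_θ'` where the two σ-algebras agree, a stopping time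
`τ ≥ θ` is replaced by `τ' = τ ∨ θ'` on `A` and `θ'` off `A`, a stopping time `≥ θ'`.
Biadmissibility gives `ψ(τ, θ) = ψ(τ', θ')` on `A`, hence
`E[ψ(τ, θ) | F_θ] = E[ψ(τ', θ') | F_θ'] ≤ u θ'` on `A`, so `u θ ≤ u θ'` there, and symmetrically. -/

section EssSup

variable {m m0 : MeasurableSpace Ω} {μ : Measure Ω} [IsFiniteMeasure μ]

lemma Real.norm_arctan_le (x : ℝ) : ‖Real.arctan x‖ ≤ Real.pi / 2 :=
  abs_le.2 ⟨(Real.neg_pi_div_two_lt_arctan x).le, (Real.arctan_lt_pi_div_two x).le⟩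

lemma integrable_arctan_comp {h : Ω → ℝ} (hh : AEStronglyMeasurable h μ) :
    Integrable (fun ω => Real.arctan (h ω)) μ :=
  .of_bound (Real.continuous_arctan.comp_aestronglyMeasurable hh) (Real.pi / 2) <|
    ae_of_all _ fun _ => Real.norm_arctan_le _

lemma ae_eq_of_ae_le_of_integral_arctan_le {g h : Ω → ℝ} (hg : AEStronglyMeasurable g μ)
    (hh : AEStronglyMeasurable h μ) (hgh : g ≤ᵐ[μ] h)
    (hint : ∫ ω, Real.arctan (h ω) ∂μ ≤ ∫ ω, Real.arctan (g ω) ∂μ) : g =ᵐ[μ] h := by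
  have hle : (fun ω => Real.arctan (g ω)) ≤ᵐ[μ] fun ω => Real.arctan (h ω) :=
    hgh.mono fun _ h => Real.arctan_strictMono.monotone h
  have harctan : (fun ω => Real.arctan (g ω)) =ᵐ[μ] fun ω => Real.arctan (h ω) :=
    (integral_eq_iff_of_ae_le (integrable_arctan_comp hg) (integrable_arctan_comp hh) hle).1
      ((integral_mono_ae (integrable_arctan_comp hg) (integrable_arctan_comp hh) hle).antisymm
        hint)
  exact harctan.mono fun _ h => Real.arctan_injective h

theorem exists_greatest_measurable_ae_le (hm : m ≤ m0) {v : Ω → ℝ}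
    (hne : ∃ g, Measurable[m] g ∧ g ≤ᵐ[μ] v) :
    ∃ w, Measurable[m] w ∧ w ≤ᵐ[μ] v ∧ ∀ h, Measurable[m] h → h ≤ᵐ[μ] v → h ≤ᵐ[μ] w := by
  set H : Set (Ω → ℝ) := {h | Measurable[m] h ∧ h ≤ᵐ[μ] v}
  set I : (Ω → ℝ) → ℝ := fun h => ∫ ω, Real.arctan (h ω) ∂μ
  have hasm : ∀ h ∈ H, AEStronglyMeasurable h μ := fun h hh =>
    (hh.1.mono hm le_rfl).aestronglyMeasurable
  have hbdd : BddAbove (I '' H) := by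
    refine ⟨Real.pi / 2 * μ.real univ, forall_mem_image.2 fun h _ => ?_⟩
    exact (Real.le_norm_self _).trans
      (norm_integral_le_of_norm_le_const (ae_of_all _ fun _ => Real.norm_arctan_le _))
  obtain ⟨_, -, hlim, hmem⟩ := exists_seq_tendsto_sSup ((show H.Nonempty from hne).image I) hbdd
  choose k hkH hk using hmem
  set w : Ω → ℝ := fun ω => ⨆ n, k n ω
  have hkw : ∀ᵐ ω ∂μ, (∀ n, k n ω ≤ w ω) ∧ w ω ≤ v ω := by
    filter_upwards [ae_all_iff.2 fun n => (hkH n).2] with ω hω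
    exact ⟨le_ciSup ⟨v ω, forall_mem_range.2 hω⟩, ciSup_le hω⟩
  have hwH : w ∈ H := ⟨Measurable.iSup fun n => (hkH n).1, hkw.mono fun _ h => h.2⟩
  have hIw : sSup (I '' H) ≤ I w := le_of_tendsto' hlim fun n => hk n ▸
    integral_mono_ae (integrable_arctan_comp (hasm _ (hkH n))) (integrable_arctan_comp (hasm _ hwH))
      (hkw.mono fun _ h => Real.arctan_strictMono.monotone (h.1 n))
  refine ⟨w, hwH.1, hwH.2, fun h hh hhv => ?_⟩
  have hmaxH : h ⊔ w ∈ H :=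
    ⟨hh.sup hwH.1, by filter_upwards [hhv, hwH.2] with ω h1 h2 using max_le h1 h2⟩
  have hmax : w =ᵐ[μ] h ⊔ w := ae_eq_of_ae_le_of_integral_arctan_le (hasm _ hwH) (hasm _ hmaxH)
    (ae_of_all _ fun _ => le_sup_right) ((le_csSup hbdd (mem_image_of_mem I hmaxH)).trans hIw)
  filter_upwards [hmax] with ω hω
  exact hω ▸ le_sup_left

theorem IsEssSupFam.exists_measurable_ae_eq (hm : m ≤ m0) {ι : Sort*} {P : ι → Prop}
    {f : ι → Ω → ℝ} {v : Ω → ℝ} (hv : IsEssSupFam μ P f v)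
    (hf : ∀ i, P i → Measurable[m] (f i)) (hP : ∃ i, P i) :
    ∃ w, Measurable[m] w ∧ v =ᵐ[μ] w := by
  obtain ⟨i, hi⟩ := hP
  obtain ⟨w, hwm, hwv, hgreatest⟩ :=
    exists_greatest_measurable_ae_le hm ⟨f i, hf i hi, hv.1 i hi⟩
  exact ⟨w, hwm, (hv.2 w fun j hj => hgreatest _ (hf j hj) (hv.1 j hj)).antisymm hwv⟩

end EssSup

section StoppingTime

variable {m0 : MeasurableSpace Ω} {ι : Type*} [LinearOrder ι] {𝓖 : Filtration ι m0}
  {τ σ : Ω → WithTop ι}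

theorem MeasureTheory.IsStoppingTime.piecewise_of_measurableSet (hσ : IsStoppingTime 𝓖 σ)
    (hτ : IsStoppingTime 𝓖 τ) (hστ : σ ≤ τ) {s : Set Ω} [DecidablePred (· ∈ s)]
    (hs : MeasurableSet[hσ.measurableSpace] s) : IsStoppingTime 𝓖 (s.piecewise τ σ) := by
  intro i
  have hset : {ω | s.piecewise τ σ ω ≤ i} =
      s ∩ {ω | σ ω ≤ i} ∩ {ω | τ ω ≤ i} ∪ sᶜ ∩ {ω | σ ω ≤ i} := by
    ext ω
    by_cases hω : ω ∈ s
    · simpa [hω] using fun h => (hστ ω).trans h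
    · simp [hω]
  rw [hset]
  exact ((hs.2 i).inter (hτ i)).union (hs.compl.2 i)

variable [TopologicalSpace ι] [OrderTopology ι] [SecondCountableTopology ι]

theorem MeasureTheory.IsStoppingTime.measurableSet_of_subset_le (hτ : IsStoppingTime 𝓖 τ)
    (hσ : IsStoppingTime 𝓖 σ) {s : Set Ω} (hsub : s ⊆ {ω | τ ω ≤ σ ω})
    (hs : MeasurableSet[hτ.measurableSpace] s) : MeasurableSet[hσ.measurableSpace] s := by
  rw [← inter_eq_left.2 hsub, hτ.measurableSet_inter_le_iff hσ, inter_eq_left.2 hsub] at hs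
  exact ((hτ.measurableSet_min_iff hσ s).1 hs).2

theorem condExp_ae_eq_restrict_eq_stoppingTime {μ : Measure Ω} (hτ : IsStoppingTime 𝓖 τ)
    (hσ : IsStoppingTime 𝓖 σ) [SigmaFinite (μ.trim hτ.measurableSpace_le)]
    [SigmaFinite (μ.trim hσ.measurableSpace_le)] (f : Ω → ℝ) :
    μ[f | hτ.measurableSpace] =ᵐ[μ.restrict {ω | τ ω = σ ω}] μ[f | hσ.measurableSpace] :=
  condExp_ae_eq_restrict_of_measurableSpace_eq_on hτ.measurableSpace_le hσ.measurableSpace_le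
    (hτ.measurableSet_eq_stopping_time hσ) fun _ =>
      ⟨hτ.measurableSet_of_subset_le hσ fun _ hω => hω.1.le,
        hσ.measurableSet_of_subset_le hτ fun _ hω => hω.1.ge⟩

end StoppingTime

theorem condExp_ae_eq_restrict_of_ae_eq_restrict {m m0 : MeasurableSpace Ω} {μ : Measure Ω}
    {s : Set Ω} (hs : MeasurableSet[m] s) {f g : Ω → ℝ} (hf : Integrable f μ)
    (hg : Integrable g μ) (hfg : f =ᵐ[μ.restrict s] g) :
    μ[f | m] =ᵐ[μ.restrict s] μ[g | m] := by
  have hzero := condExp_ae_eq_restrict_zero (f := f - g) hs (hfg.mono fun ω h => sub_eq_zero.2 h)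
  filter_upwards [ae_restrict_of_ae (condExp_sub hf hg m), hzero] with ω hsub hω
  rw [hsub] at hω
  exact sub_eq_zero.1 hω

namespace MemT0

variable {m0 : MeasurableSpace Ω} {𝓕 : Filtration ℝ m0} {T : ℝ} {τ σ : Ω → ℝ}

theorem max (hτ : MemT0 𝓕 T τ) (hσ : MemT0 𝓕 T σ) :
    MemT0 𝓕 T fun ω => max (τ ω) (σ ω) :=
  ⟨by simpa only [WithTop.coe_max] using hτ.1.max hσ.1, fun ω =>
    ⟨(hτ.2 ω).1.trans (le_max_left _ _), max_le (hτ.2 ω).2 (hσ.2 ω).2⟩⟩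

theorem piecewise (hσ : MemT0 𝓕 T σ) (hτ : MemT0 𝓕 T τ) (hστ : σ ≤ τ) {s : Set Ω}
    [DecidablePred (· ∈ s)] (hs : MeasurableSet[hσ.1.measurableSpace] s) :
    MemT0 𝓕 T (s.piecewise τ σ) := by
  refine ⟨?_, fun ω => ?_⟩
  · have hcoe : (fun ω => (s.piecewise τ σ ω : WithTop ℝ)) =
        s.piecewise (fun ω => (τ ω : WithTop ℝ)) fun ω => (σ ω : WithTop ℝ) := by
      funext ω
      by_cases hω : ω ∈ s <;> simp [hω]
    rw [hcoe]
    exact hσ.1.piecewise_of_measurableSet hτ.1 (fun ω => WithTop.coe_le_coe.2 (hστ ω)) hs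
  · by_cases hω : ω ∈ s <;> simp [hω, hτ.2 ω, hσ.2 ω]

end MemT0

theorem AdmissibleAE.max {m0 : MeasurableSpace Ω} {𝓕 : Filtration ℝ m0} {T : ℝ}
    {μ : Measure Ω} {φ₁ φ₂ : (Ω → ℝ) → Ω → ℝ} (h₁ : AdmissibleAE 𝓕 T μ φ₁)
    (h₂ : AdmissibleAE 𝓕 T μ φ₂) : AdmissibleAE 𝓕 T μ fun θ ω => max (φ₁ θ ω) (φ₂ θ ω) := by
  refine ⟨fun θ hθ => ?_, fun θ θ' hθ hθ' => ?_⟩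
  · obtain ⟨h0, w₁, hw₁, hφw₁⟩ := h₁.1 θ hθ
    obtain ⟨-, w₂, hw₂, hφw₂⟩ := h₂.1 θ hθ
    exact ⟨h0.mono fun _ h => h.trans (le_max_left _ _), w₁ ⊔ w₂, hw₁.sup hw₂,
      hφw₁.sup hφw₂⟩
  · filter_upwards [h₁.2 θ θ' hθ hθ', h₂.2 θ θ' hθ hθ'] with ω h₁ω h₂ω hω
    rw [h₁ω hω, h₂ω hω]

section ValueFamily

variable {m0 : MeasurableSpace Ω} {μ : Measure Ω} [IsFiniteMeasure μ] {𝓕 : Filtration ℝ m0}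
  {T : ℝ} {ψ : (Ω → ℝ) → (Ω → ℝ) → Ω → ℝ} {u : (Ω → ℝ) → Ω → ℝ} {θ θ' : Ω → ℝ}

theorem exists_memT0_condExp_ae_eq_restrict_eq
    (hψ : ∀ τ τ' S S', MemT0 𝓕 T τ → MemT0 𝓕 T τ' → MemT0 𝓕 T S → MemT0 𝓕 T S' →
      ∀ᵐ ω ∂μ, τ ω = τ' ω → S ω = S' ω → ψ τ S ω = ψ τ' S' ω)
    (hψint : ∀ τ₁ τ₂, MemT0 𝓕 T τ₁ → MemT0 𝓕 T τ₂ → Integrable (ψ τ₁ τ₂) μ)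
    (hθ : MemT0 𝓕 T θ) (hθ' : MemT0 𝓕 T θ') {τ : Ω → ℝ} (hτ : MemT0 𝓕 T τ)
    (hθτ : θ ≤ᵐ[μ] τ) :
    ∃ τ', MemT0 𝓕 T τ' ∧ θ' ≤ τ' ∧ μ[ψ τ θ | hθ.1.measurableSpace]
      =ᵐ[μ.restrict {ω | θ ω = θ' ω}] μ[ψ τ' θ' | hθ'.1.measurableSpace] := by
  classical
  set A := {ω | θ ω = θ' ω}
  have hAθ : MeasurableSet[hθ.1.measurableSpace] A := by
    simpa only [WithTop.coe_eq_coe] using hθ.1.measurableSet_eq_stopping_time hθ'.1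
  have hAθ' : MeasurableSet[hθ'.1.measurableSpace] A := by
    simpa only [WithTop.coe_eq_coe, eq_comm] using hθ'.1.measurableSet_eq_stopping_time hθ.1
  set τ' := A.piecewise (fun ω => max (τ ω) (θ' ω)) θ'
  have hτ' : MemT0 𝓕 T τ' := hθ'.piecewise (hτ.max hθ') (fun ω => le_max_right _ _) hAθ'
  refine ⟨τ', hτ', fun ω => ?_, ?_⟩
  · by_cases hω : ω ∈ A <;> simp [τ', hω]
  have hψA : ψ τ θ =ᵐ[μ.restrict A] ψ τ' θ' := by
    rw [EventuallyEq, ae_restrict_iff' (hθ.1.measurableSpace_le _ hAθ)]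
    filter_upwards [hψ τ τ' θ θ' hτ hτ' hθ hθ', hθτ] with ω hψω hθτω hω
    refine hψω ?_ hω
    have hω' : θ ω = θ' ω := hω
    simp [τ', hω, ← hω', hθτω]
  refine (condExp_ae_eq_restrict_of_ae_eq_restrict hAθ (hψint _ _ hτ hθ) (hψint _ _ hτ' hθ')
    hψA).trans ?_
  simpa only [WithTop.coe_eq_coe] using
    condExp_ae_eq_restrict_eq_stoppingTime (μ := μ) hθ.1 hθ'.1 (ψ τ' θ')

theorem ae_le_of_eq_of_isEssSupFam
    (hψ : ∀ τ τ' S S', MemT0 𝓕 T τ → MemT0 𝓕 T τ' → MemT0 𝓕 T S → MemT0 𝓕 T S' →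
      ∀ᵐ ω ∂μ, τ ω = τ' ω → S ω = S' ω → ψ τ S ω = ψ τ' S' ω)
    (hψint : ∀ τ₁ τ₂, MemT0 𝓕 T τ₁ → MemT0 𝓕 T τ₂ → Integrable (ψ τ₁ τ₂) μ)
    (hu : ∀ θ (hθ : MemT0 𝓕 T θ), IsEssSupFam μ (fun τ => MemT0 𝓕 T τ ∧ θ ≤ᵐ[μ] τ)
      (fun τ => μ[ψ τ θ | hθ.1.measurableSpace]) (u θ))
    (hθ : MemT0 𝓕 T θ) (hθ' : MemT0 𝓕 T θ') :
    ∀ᵐ ω ∂μ, θ ω = θ' ω → u θ ω ≤ u θ' ω := by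
  classical
  set A := {ω | θ ω = θ' ω}
  have hub : ∀ τ, MemT0 𝓕 T τ ∧ θ ≤ᵐ[μ] τ →
      μ[ψ τ θ | hθ.1.measurableSpace] ≤ᵐ[μ] A.piecewise (u θ') (u θ) := by
    rintro τ ⟨hτ, hθτ⟩
    obtain ⟨τ', hτ', hθ'τ', heq⟩ :=
      exists_memT0_condExp_ae_eq_restrict_eq hψ hψint hθ hθ' hτ hθτ
    filter_upwards [ae_imp_of_ae_restrict heq, (hu θ' hθ').1 τ' ⟨hτ', ae_of_all _ hθ'τ'⟩,
      (hu θ hθ).1 τ ⟨hτ, hθτ⟩] with ω heqω hle' hle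
    by_cases hω : ω ∈ A
    · simpa [hω, heqω hω] using hle'
    · simpa [hω] using hle
  filter_upwards [(hu θ hθ).2 _ hub] with ω hω hA
  simpa [Set.piecewise_eq_of_mem _ _ _ (show ω ∈ A from hA)] using hω

theorem admissibleAE_of_isEssSupFam (hψ₀ : ∀ θ, MemT0 𝓕 T θ → 0 ≤ᵐ[μ] ψ θ θ)
    (hψ : ∀ τ τ' S S', MemT0 𝓕 T τ → MemT0 𝓕 T τ' → MemT0 𝓕 T S → MemT0 𝓕 T S' →
      ∀ᵐ ω ∂μ, τ ω = τ' ω → S ω = S' ω → ψ τ S ω = ψ τ' S' ω)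
    (hψint : ∀ τ₁ τ₂, MemT0 𝓕 T τ₁ → MemT0 𝓕 T τ₂ → Integrable (ψ τ₁ τ₂) μ)
    (hu : ∀ θ (hθ : MemT0 𝓕 T θ), IsEssSupFam μ (fun τ => MemT0 𝓕 T τ ∧ θ ≤ᵐ[μ] τ)
      (fun τ => μ[ψ τ θ | hθ.1.measurableSpace]) (u θ)) :
    AdmissibleAE 𝓕 T μ u := by
  refine ⟨fun θ hθ => ?_, fun θ θ' hθ hθ' => ?_⟩
  · have hθθ : MemT0 𝓕 T θ ∧ θ ≤ᵐ[μ] θ := ⟨hθ, EventuallyLE.refl _ _⟩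
    refine ⟨?_, (hu θ hθ).exists_measurable_ae_eq hθ.1.measurableSpace_le
      (fun _ _ => stronglyMeasurable_condExp.measurable) ⟨θ, hθθ⟩⟩
    filter_upwards [condExp_nonneg (m := hθ.1.measurableSpace) (hψ₀ θ hθ),
      (hu θ hθ).1 θ hθθ] with ω h0 hle using h0.trans hle
  · filter_upwards [ae_le_of_eq_of_isEssSupFam hψ hψint hu hθ hθ',
      ae_le_of_eq_of_isEssSupFam hψ hψint hu hθ' hθ] with ω hle hge hω
    exact (hle hω).antisymm (hge hω.symm)

end ValueFamily

theorem new_reward_admissible_general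
    {m0 : MeasurableSpace Ω} (μ : Measure Ω) [IsProbabilityMeasure μ]
    (𝓕 : Filtration ℝ m0) (T : ℝ)
    (ψ : (Ω → ℝ) → (Ω → ℝ) → Ω → ℝ)
    (hψ : Biadmissible 𝓕 T μ ψ)
    (hψint : ∀ τ₁ τ₂, MemT0 𝓕 T τ₁ → MemT0 𝓕 T τ₂ → Integrable (ψ τ₁ τ₂) μ)
    (u₁ u₂ : (Ω → ℝ) → Ω → ℝ)
    (hu₁ : ∀ θ (hθ : MemT0 𝓕 T θ),
      IsEssSupFam μ (fun τ => MemT0 𝓕 T τ ∧ θ ≤ᵐ[μ] τ)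
        (fun τ => μ[ψ τ θ | hθ.1.measurableSpace]) (u₁ θ))
    (hu₂ : ∀ θ (hθ : MemT0 𝓕 T θ),
      IsEssSupFam μ (fun τ => MemT0 𝓕 T τ ∧ θ ≤ᵐ[μ] τ)
        (fun τ => μ[ψ θ τ | hθ.1.measurableSpace]) (u₂ θ)) :
    AdmissibleAE 𝓕 T μ u₁ ∧ AdmissibleAE 𝓕 T μ u₂ ∧
    AdmissibleAE 𝓕 T μ (fun θ ω => max (u₁ θ ω) (u₂ θ ω)) := by
  have hψ₀ : ∀ θ, MemT0 𝓕 T θ → 0 ≤ᵐ[μ] ψ θ θ := fun θ hθ => ae_of_all _ (hψ.1 θ θ hθ hθ).2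
  have h₁ : AdmissibleAE 𝓕 T μ u₁ := admissibleAE_of_isEssSupFam hψ₀ hψ.2 hψint hu₁
  have h₂ : AdmissibleAE 𝓕 T μ u₂ := admissibleAE_of_isEssSupFam (ψ := fun τ θ => ψ θ τ) hψ₀
    (fun τ τ' S S' hτ hτ' hS hS' => (hψ.2 S S' τ τ' hS hS' hτ hτ').mono fun _ h hτω hSω =>
      h hSω hτω)
    (fun τ₁ τ₂ h₁ h₂ => hψint τ₂ τ₁ h₂ h₁) hu₂
  exact ⟨h₁, h₂, h₁.max h₂⟩

/-- For a biadmissible family `ψ`, the families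
`u₁(θ) = ess sup_{τ₁ ∈ T_θ} E[ψ(τ₁, θ) | F_θ]`, `u₂(θ) = ess sup_{τ₂ ∈ T_θ} E[ψ(θ, τ₂) | F_θ]`
and the new reward `φ(θ) = max(u₁(θ), u₂(θ))` are admissible families of
nonnegative random variables. -/
theorem new_reward_admissible
    {m0 : MeasurableSpace Ω} (μ : Measure Ω) [IsProbabilityMeasure μ]
    (𝓕 : Filtration ℝ m0) (T : ℝ) (hT : 0 ≤ T)
    (hFright : ∀ t : ℝ, 𝓕 t = ⨅ s ∈ Set.Ioi t, 𝓕 s)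
    (hFnull : ∀ A : Set Ω, μ A = 0 → MeasurableSet[𝓕 0] A)
    (ψ : (Ω → ℝ) → (Ω → ℝ) → Ω → ℝ)
    (hψ : Biadmissible 𝓕 T μ ψ)
    (hψint : ∀ τ₁ τ₂, MemT0 𝓕 T τ₁ → MemT0 𝓕 T τ₂ → Integrable (ψ τ₁ τ₂) μ)
    (u₁ u₂ : (Ω → ℝ) → Ω → ℝ)
    (hu₁ : ∀ θ (hθ : MemT0 𝓕 T θ),
      IsEssSupFam μ (fun τ => MemT0 𝓕 T τ ∧ θ ≤ᵐ[μ] τ)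
        (fun τ => μ[ψ τ θ | hθ.1.measurableSpace]) (u₁ θ))
    (hu₂ : ∀ θ (hθ : MemT0 𝓕 T θ),
      IsEssSupFam μ (fun τ => MemT0 𝓕 T τ ∧ θ ≤ᵐ[μ] τ)
        (fun τ => μ[ψ θ τ | hθ.1.measurableSpace]) (u₂ θ)) :
    AdmissibleAE 𝓕 T μ u₁ ∧ AdmissibleAE 𝓕 T μ u₂ ∧
    AdmissibleAE 𝓕 T μ (fun θ ω => max (u₁ θ ω) (u₂ θ ω)) :=
  new_reward_admissible_general μ 𝓕 T ψ hψ hψint u₁ u₂ hu₁ hu₂
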